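/- If there is a tree-like resolution derivation of a clause C of length L, then there is a tree-like merge resolution derivation of some clause C' ⊆ C of length at most L, i.e., a tree-like derivation in which every resolution step has at least one premise that is either an axiom or a merge. -/

import Mathlib

open Finset

abbrev Lit (V : Type) := V × Bool
abbrev Clause (V : Type) := Finset (Lit V)

def Lit.negate {V : Type} (l : Lit V) : Lit V := (l.1, !l.2)

/-- Justification of a proof line: `none` = axiom; `Sum.inl (i,j,x)` = resolution of
lines `i,j` on pivot variable `x`; `Sum.inr i` = weakening of line `i`. -/
abbrev Just (V : Type) := (ℕ × ℕ × V) ⊕ ℕ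

structure Deriv (V : Type) where
  lines : List (Clause V × Option (Just V))

namespace Deriv

variable {V : Type} [DecidableEq V]

def length (π : Deriv V) : ℕ := π.lines.length

def clause (π : Deriv V) (i : ℕ) : Clause V := (π.lines.getD i (∅, none)).1

def just (π : Deriv V) (i : ℕ) : Option (Just V) := (π.lines.getD i (∅, none)).2

def lastClause (π : Deriv V) : Clause V := π.clause (π.length - 1)

def resolve (A B : Clause V) (x : V) : Clause V := A.erase (x, true) ∪ B.erase (x, false)

def ValidLine (Ax : Set (Clause V)) (w : Bool) (π : Deriv V) (k : ℕ) : Prop :=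
  match π.just k with
  | none => π.clause k ∈ Ax
  | some (Sum.inl (i, j, x)) =>
      i < k ∧ j < k ∧ (x, true) ∈ π.clause i ∧ (x, false) ∈ π.clause j ∧
        π.clause k = resolve (π.clause i) (π.clause j) x
  | some (Sum.inr i) => w = true ∧ i < k ∧ π.clause i ⊆ π.clause k

/-- valid resolution derivation (no weakening) from axiom set `Ax` -/
def Valid (Ax : Set (Clause V)) (π : Deriv V) : Prop :=
  0 < π.length ∧ ∀ k < π.length, ValidLine Ax false π k

/-- valid resolution derivation with weakening allowed -/
def ValidW (Ax : Set (Clause V)) (π : Deriv V) : Prop :=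
  0 < π.length ∧ ∀ k < π.length, ValidLine Ax true π k

/-- line `k` is a resolution step whose two premises share a literal besides the pivot -/
def IsMergeLine (π : Deriv V) (k : ℕ) : Prop :=
  ∃ i j x, π.just k = some (Sum.inl (i, j, x)) ∧
    ∃ l, l ∈ (π.clause i).erase (x, true) ∧ l ∈ (π.clause j).erase (x, false)

def IsAxiomLine (π : Deriv V) (k : ℕ) : Prop := k < π.length ∧ π.just k = none

def IsParent (π : Deriv V) (i k : ℕ) : Prop :=
  (∃ j x, π.just k = some (Sum.inl (i, j, x)) ∨ π.just k = some (Sum.inl (j, i, x))) ∨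
    π.just k = some (Sum.inr i)

/-- reachability in the proof DAG -/
inductive Reaches (π : Deriv V) : ℕ → ℕ → Prop
  | refl (i : ℕ) : Reaches π i i
  | step {i j k : ℕ} : Reaches π i j → IsParent π j k → Reaches π i k

/-- the derivation uses the axiom clause `A`: some axiom line carries `A` and the final
line is reachable from it in the proof DAG -/
def UsesAxiom (π : Deriv V) (A : Clause V) : Prop :=
  ∃ i, IsAxiomLine π i ∧ π.clause i = A ∧ Reaches π i (π.length - 1)

/-- input derivation: every resolution step has at least one premise that is an axiom line -/
def Input (π : Deriv V) : Prop :=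
  ∀ k i j x, π.just k = some (Sum.inl (i, j, x)) → π.just i = none ∨ π.just j = none

/-- tree-like: every line is a premise of at most one line -/
def TreeLike (π : Deriv V) : Prop :=
  ∀ i k₁ k₂, IsParent π i k₁ → IsParent π i k₂ → k₁ = k₂

def vars (C : Clause V) : Finset V := C.image Prod.fst

/-- strongly regular: once a variable is used as pivot it never occurs in a later clause -/
def StronglyRegular (π : Deriv V) : Prop :=
  ∀ k i j x, π.just k = some (Sum.inl (i, j, x)) →
    ∀ k', k ≤ k' → k' < π.length → x ∉ vars (π.clause k')

/-- resolution with merge ancestors: every line used as a premise more than once has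
an ancestor in the proof DAG that is a merge -/
def RMA (π : Deriv V) : Prop :=
  ∀ i, (∃ k₁ k₂, k₁ ≠ k₂ ∧ IsParent π i k₁ ∧ IsParent π i k₂) →
    ∃ a, Reaches π a i ∧ IsMergeLine π a

end Deriv

def seqGet {V : Type} (S : List (Deriv V)) (t : ℕ) : Deriv V := S.getD t ⟨[]⟩

def seqLength {V : Type} (S : List (Deriv V)) : ℕ := (S.map Deriv.length).sum

/-- input-structured sequence over axiom set `Ax`: each constituent is a valid input
derivation which may use the final clauses (lemmas) of earlier constituents as axioms;
`w` tells whether weakening is allowed -/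
def SeqValid {V : Type} [DecidableEq V] (Ax : Set (Clause V)) (S : List (Deriv V))
    (w : Bool) : Prop :=
  S ≠ [] ∧ ∀ t < S.length,
    (cond w Deriv.ValidW Deriv.Valid)
        (Ax ∪ {C | ∃ t' < t, C = (seqGet S t').lastClause}) (seqGet S t) ∧
      (seqGet S t).Input

/-- every lemma (last clause of a non-final constituent) is derived by a merge step -/
def MergeLemmas {V : Type} [DecidableEq V] (S : List (Deriv V)) : Prop :=
  ∀ t, t + 1 < S.length → (seqGet S t).IsMergeLine ((seqGet S t).length - 1)

def LocallyRegular {V : Type} [DecidableEq V] (S : List (Deriv V)) : Prop :=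
  ∀ t < S.length, (seqGet S t).StronglyRegular

/-- every resolution step has a premise that is an axiom or a merge -/
def Deriv.MergeRes {V : Type} [DecidableEq V] (π : Deriv V) : Prop :=
  ∀ k i j x, π.just k = some (Sum.inl (i, j, x)) →
    (π.just i = none ∨ π.IsMergeLine i) ∨ (π.just j = none ∨ π.IsMergeLine j)

/-!
A tree-like derivation unfolds into a proof tree with at most as many nodes as lines, because
the two premises of a line have disjoint sets of ancestors.

On proof trees, merge-resolution trees are closed under resolution without growth. To resolve
such a tree `σ` on `l` against a tree `τ ∋ ¬l`: if `τ` is an axiom or a merge, resolve directly.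
Otherwise `τ` resolves `M` and `N` on `w` without a merge, so `¬l` comes from one side only, say
`M`; resolve `σ` against `M` first and then, if `w` survives, the result against `N`. Each step
either resolves or keeps a premise that already avoids the pivot, so clauses only shrink and the
size stays within `|σ| + |τ| + 1`. Listing the final tree in post-order gives the derivation.
-/

@[simp]
lemma Lit.negate_negate {V : Type} (l : Lit V) : l.negate.negate = l := by
  simp [Lit.negate]

inductive ProofTree (V : Type) where
  | leaf : Clause V → ProofTree V
  | node : ProofTree V → ProofTree V → Lit V → ProofTree V

namespace ProofTree

variable {V : Type}

def size : ProofTree V → ℕ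
  | leaf _ => 1
  | node a b _ => a.size + b.size + 1

lemma one_le_size (t : ProofTree V) : 1 ≤ t.size := by
  cases t <;> simp [size]

variable [DecidableEq V]

def clause : ProofTree V → Clause V
  | leaf C => C
  | node a b l => a.clause.erase l ∪ b.clause.erase l.negate

def Valid (Ax : Set (Clause V)) : ProofTree V → Prop
  | leaf C => C ∈ Ax
  | node a b l => a.Valid Ax ∧ b.Valid Ax ∧ l ∈ a.clause ∧ l.negate ∈ b.clause

def IsAxiomOrMerge : ProofTree V → Prop
  | leaf _ => True
  | node a b l => ∃ m, m ∈ a.clause.erase l ∧ m ∈ b.clause.erase l.negate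

def MergeRes : ProofTree V → Prop
  | leaf _ => True
  | node a b _ => a.MergeRes ∧ b.MergeRes ∧ (a.IsAxiomOrMerge ∨ b.IsAxiomOrMerge)

variable {Ax : Set (Clause V)}

def MergeDerivable (Ax : Set (Clause V)) (C : Clause V) (n : ℕ) : Prop :=
  ∃ t : ProofTree V, t.Valid Ax ∧ t.MergeRes ∧ t.clause ⊆ C ∧ t.size ≤ n

lemma MergeDerivable.mono {C D : Clause V} {m n : ℕ} (h : MergeDerivable Ax C m)
    (hCD : C ⊆ D) (hmn : m ≤ n) : MergeDerivable Ax D n :=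
  let ⟨t, hv, hm, hC, hs⟩ := h
  ⟨t, hv, hm, hC.trans hCD, hs.trans hmn⟩

def Resolvable (τ : ProofTree V) (Ax : Set (Clause V)) : Prop :=
  ∀ (A : Clause V) (m : ℕ) (l : Lit V), MergeDerivable Ax A m → l.negate ∈ τ.clause →
    MergeDerivable Ax (A.erase l ∪ τ.clause.erase l.negate) (m + τ.size + 1)

lemma resolvable_of_isAxiomOrMerge {τ : ProofTree V} (hv : τ.Valid Ax) (hm : τ.MergeRes)
    (hg : τ.IsAxiomOrMerge) : τ.Resolvable Ax := by
  rintro A m l ⟨σ, hσv, hσm, hσA, hσs⟩ hl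
  by_cases hlσ : l ∈ σ.clause
  · exact ⟨.node σ τ l, ⟨hσv, hv, hlσ, hl⟩, ⟨hσm, hm, .inr hg⟩,
      union_subset_union (erase_subset_erase _ hσA) subset_rfl, by simp [size]; omega⟩
  · exact ⟨σ, hσv, hσm, (subset_erase.2 ⟨hσA, hlσ⟩).trans subset_union_left, by omega⟩

lemma resolvable_node_of_mem_left {M N : ProofTree V} {w : Lit V} (hM : M.Resolvable Ax)
    (hN : N.Resolvable Ax) (hw : w.negate ∈ N.clause) {A : Clause V} {m : ℕ} {l : Lit V}
    (hA : MergeDerivable Ax A m) (hlM : l.negate ∈ M.clause)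
    (hlN : l.negate ∉ N.clause.erase w.negate) :
    MergeDerivable Ax (A.erase l ∪ (node M N w).clause.erase l.negate)
      (m + (node M N w).size + 1) := by
  refine (hN _ _ w (hM _ _ l hA hlM) hw).mono ?_ (by simp only [size]; omega)
  intro u
  simp only [clause, mem_union, mem_erase]
  grind

lemma resolvable_node {M N : ProofTree V} {w : Lit V} (hM : M.Resolvable Ax)
    (hN : N.Resolvable Ax) (hwM : w ∈ M.clause) (hwN : w.negate ∈ N.clause)
    (hg : ¬ (node M N w).IsAxiomOrMerge) :
    (node M N w).Resolvable Ax := by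
  intro A m l hA hl
  simp only [IsAxiomOrMerge, not_exists, not_and] at hg
  rcases mem_union.1 hl with hlM | hlN
  · exact resolvable_node_of_mem_left hM hN hwN hA (mem_of_mem_erase hlM) (hg _ hlM)
  · have := resolvable_node_of_mem_left (w := w.negate) hN hM (by simpa using hwM) hA
      (mem_of_mem_erase hlN) (by simpa using fun h => hg _ h hlN)
    simpa [clause, size, union_comm, add_comm] using this

lemma Valid.resolvable {τ : ProofTree V} (hv : τ.Valid Ax) (hm : τ.MergeRes) :
    τ.Resolvable Ax := by
  induction τ with
  | leaf C => exact resolvable_of_isAxiomOrMerge hv hm trivial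
  | node M N w ihM ihN =>
    by_cases hg : (node M N w).IsAxiomOrMerge
    · exact resolvable_of_isAxiomOrMerge hv hm hg
    · exact resolvable_node (ihM hv.1 hm.1) (ihN hv.2.1 hm.2.1) hv.2.2.1 hv.2.2.2 hg

lemma MergeDerivable.resolve {A B : Clause V} {m n : ℕ} (hA : MergeDerivable Ax A m)
    (hB : MergeDerivable Ax B n) (l : Lit V) :
    MergeDerivable Ax (A.erase l ∪ B.erase l.negate) (m + n + 1) := by
  obtain ⟨τ, hτv, hτm, hτB, hτs⟩ := hB
  by_cases hl : l.negate ∈ τ.clause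
  · exact (hτv.resolvable hτm A m l hA hl).mono
      (union_subset_union subset_rfl (erase_subset_erase _ hτB)) (by omega)
  · exact ⟨τ, hτv, hτm, (subset_erase.2 ⟨hτB, hl⟩).trans subset_union_right, by omega⟩

lemma Valid.mergeDerivable {t : ProofTree V} (hv : t.Valid Ax) :
    MergeDerivable Ax t.clause t.size := by
  induction t with
  | leaf C => exact ⟨leaf C, hv, trivial, subset_rfl, le_rfl⟩
  | node a b l iha ihb => exact (iha hv.1).resolve (ihb hv.2.1) l

end ProofTree

def shiftJust {V : Type} (n : ℕ) : Just V → Just V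
  | .inl (i, j, x) => .inl (i + n, j + n, x)
  | .inr i => .inr (i + n)

@[simp]
lemma shiftJust_zero {V : Type} : shiftJust (V := V) 0 = id := by
  funext j
  rcases j with ⟨i, j, x⟩ | i <;> rfl

@[elab_as_elim]
lemma Nat.cases_lt_add_add_one {m n k : ℕ} {P : ℕ → Prop} (hk : k < m + n + 1)
    (hl : ∀ k < m, P (k + 0)) (hr : ∀ k < n, P (k + m)) (hlast : P (m + n)) : P k := by
  rcases lt_or_ge k m with h | h
  · exact hl k h
  rcases lt_or_ge k (m + n) with h' | h'
  · simpa [Nat.sub_add_cancel h] using hr (k - m) (by omega)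
  · exact (show k = m + n by omega) ▸ hlast

namespace Deriv

variable {V : Type} {π π' : Deriv V} {n : ℕ}

open Relation

lemma lt_length_of_just_eq_some {k : ℕ} {j : Just V} (h : π.just k = some j) : k < π.length := by
  by_contra hk
  rw [just, List.getD_eq_default _ _ (not_lt.1 hk)] at h
  cases h

lemma IsParent.lt_length {a k : ℕ} (hp : π.IsParent a k) : k < π.length := by
  rcases hp with ⟨_, _, h | h⟩ | h <;> exact lt_length_of_just_eq_some h

open scoped Classical in
noncomputable def ancestors (π : Deriv V) (i : ℕ) : Finset ℕ :=
  (range (i + 1)).filter fun j => ReflTransGen π.IsParent j i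

lemma card_ancestors_le (π : Deriv V) (i : ℕ) : #(π.ancestors i) ≤ i + 1 := by
  classical exact (card_filter_le _ _).trans (card_range _).le

def EmbedsAt (π π' : Deriv V) (n : ℕ) : Prop :=
  ∀ k < π.length, π'.clause (k + n) = π.clause k ∧ π'.just (k + n) = (π.just k).map (shiftJust n)

lemma EmbedsAt.isParent (h : π.EmbedsAt π' n) {a k : ℕ} (hk : k < π.length)
    (hp : π'.IsParent a (k + n)) : ∃ a₀, a = a₀ + n ∧ π.IsParent a₀ k := by
  rw [IsParent, (h k hk).2] at hp
  rcases hjk : π.just k with _ | ⟨i, j, x⟩ | i <;>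
    rcases hp with ⟨j', y, hp | hp⟩ | hp <;> simp [hjk, shiftJust] at hp
  · exact ⟨i, hp.1.symm, .inl ⟨j, x, .inl hjk⟩⟩
  · exact ⟨j, hp.2.1.symm, .inl ⟨i, x, .inr hjk⟩⟩
  · exact ⟨i, hp.symm, .inr hjk⟩

lemma EmbedsAt.just_eq_inl (h : π.EmbedsAt π' n) {k i j : ℕ} {x : V} (hk : k < π.length)
    (hj : π'.just (k + n) = some (.inl (i, j, x))) :
    ∃ i₀ j₀, i = i₀ + n ∧ j = j₀ + n ∧ π.just k = some (.inl (i₀, j₀, x)) := by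
  rw [(h k hk).2] at hj
  rcases hjk : π.just k with _ | ⟨i₀, j₀, y⟩ | i₀ <;> simp [hjk, shiftJust] at hj
  obtain ⟨rfl, rfl, rfl⟩ := hj
  exact ⟨i₀, j₀, rfl, rfl, rfl⟩

lemma embedsAt_append_left (π : Deriv V) (post : List (Clause V × Option (Just V))) :
    π.EmbedsAt ⟨π.lines ++ post⟩ 0 := by
  intro k hk
  have hk' : k < π.lines.length := hk
  simp [clause, just, List.getElem?_append_left hk']

lemma embedsAt_append_map (pre : List (Clause V × Option (Just V))) (π : Deriv V)
    (post : List (Clause V × Option (Just V))) :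
    π.EmbedsAt ⟨pre ++ π.lines.map (fun p => (p.1, p.2.map (shiftJust pre.length))) ++ post⟩
      pre.length := by
  intro k hk
  have hk' : k < π.lines.length := hk
  simp [clause, just, List.getD_eq_getElem?_getD, List.getElem?_append, hk', Nat.add_comm k]

variable [DecidableEq V] {Ax : Set (Clause V)}

lemma IsParent.lt (hv : π.Valid Ax) {a k : ℕ} (hp : π.IsParent a k) :
    a < k ∧ k < π.length := by
  have hk := hp.lt_length
  have hvl := hv.2 k hk
  rcases hp with ⟨j, x, h' | h'⟩ | h' <;> simp only [ValidLine, h'] at hvl <;> omega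

lemma le_of_reflTransGen (hv : π.Valid Ax) {a b : ℕ} (h : ReflTransGen π.IsParent a b) :
    a ≤ b := by
  induction h with
  | refl => rfl
  | tail _ hp ih => exact ih.trans (hp.lt hv).1.le

lemma mem_ancestors (hv : π.Valid Ax) {i j : ℕ} :
    j ∈ π.ancestors i ↔ ReflTransGen π.IsParent j i := by
  simpa [ancestors, Nat.lt_succ_iff] using le_of_reflTransGen hv

lemma ancestors_subset (hv : π.Valid Ax) {a i : ℕ} (hp : π.IsParent a i) :
    π.ancestors a ⊆ π.ancestors i := fun _ hj =>
  (mem_ancestors hv).2 (((mem_ancestors hv).1 hj).tail hp)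

lemma not_reflTransGen_of_isParent (hv : π.Valid Ax) (ht : π.TreeLike) {a b i : ℕ}
    (ha : π.IsParent a i) (hb : π.IsParent b i) (hab : a ≠ b) :
    ¬ ReflTransGen π.IsParent a b := by
  rw [ReflTransGen.cases_head_iff]
  rintro (rfl | ⟨c, hc, hcb⟩)
  · exact hab rfl
  · rw [ht _ _ _ hc ha] at hcb
    have := le_of_reflTransGen hv hcb
    have := (hb.lt hv).1
    omega

lemma card_ancestors_add_card_ancestors_lt (hv : π.Valid Ax) (ht : π.TreeLike) {a b i : ℕ}
    (ha : π.IsParent a i) (hb : π.IsParent b i) (hab : a ≠ b) :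
    #(π.ancestors a) + #(π.ancestors b) < #(π.ancestors i) := by
  have hdisj : Disjoint (π.ancestors a) (π.ancestors b) := by
    rw [disjoint_left]
    intro j hja hjb
    rw [mem_ancestors hv] at hja hjb
    rcases ReflTransGen.total_of_right_unique ht hja hjb with h | h
    · exact not_reflTransGen_of_isParent hv ht ha hb hab h
    · exact not_reflTransGen_of_isParent hv ht hb ha (Ne.symm hab) h
  have hsub : π.ancestors a ∪ π.ancestors b ⊂ π.ancestors i := by
    refine ssubset_iff_of_subset (union_subset (ancestors_subset hv ha) (ancestors_subset hv hb))
      |>.2 ⟨i, (mem_ancestors hv).2 .refl, ?_⟩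
    rw [mem_union, mem_ancestors hv, mem_ancestors hv]
    rintro (h | h) <;> [have := (ha.lt hv).1; have := (hb.lt hv).1] <;>
      have := le_of_reflTransGen hv h <;> omega
  rw [← card_union_of_disjoint hdisj]
  exact card_lt_card hsub

lemma resolve_self (A : Clause V) (x : V) : resolve A A x = A := by
  ext u
  simp only [resolve, mem_union, mem_erase]
  grind

lemma exists_proofTree (hv : π.Valid Ax) (ht : π.TreeLike) {i : ℕ} (hi : i < π.length) :
    ∃ t : ProofTree V, t.Valid Ax ∧ t.clause = π.clause i ∧ t.size ≤ #(π.ancestors i) := by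
  induction i using Nat.strong_induction_on with
  | _ i ih =>
  have hvl := hv.2 i hi
  rcases hj : π.just i with _ | ⟨a, b, x⟩ | a <;> simp only [ValidLine, hj] at hvl
  · exact ⟨.leaf _, hvl, rfl, card_pos.2 ⟨i, (mem_ancestors hv).2 .refl⟩⟩
  · obtain ⟨hai, hbi, hxa, hxb, hres⟩ := hvl
    have hpa : π.IsParent a i := .inl ⟨b, x, .inl hj⟩
    have hpb : π.IsParent b i := .inl ⟨a, x, .inr hj⟩
    obtain ⟨ta, hvta, hcta, hsta⟩ := ih a hai (hai.trans hi)
    obtain ⟨tb, hvtb, hctb, hstb⟩ := ih b hbi (hbi.trans hi)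
    by_cases hab : a = b
    · subst hab
      exact ⟨ta, hvta, by rw [hres, resolve_self, hcta],
        hsta.trans (card_le_card (ancestors_subset hv hpa))⟩
    · refine ⟨.node ta tb (x, true), ⟨hvta, hvtb, hcta ▸ hxa, hctb ▸ hxb⟩,
        by rw [hres, ProofTree.clause, hcta, hctb]; rfl, ?_⟩
      have := card_ancestors_add_card_ancestors_lt hv ht hpa hpb hab
      simp only [ProofTree.size]
      omega
  · exact absurd hvl.1 Bool.false_ne_true

def IsAxiomOrMerge (π : Deriv V) (k : ℕ) : Prop := π.just k = none ∨ π.IsMergeLine k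

lemma EmbedsAt.validLine (h : π.EmbedsAt π' n) {w : Bool} {k : ℕ} (hk : k < π.length)
    (hvl : π.ValidLine Ax w k) : π'.ValidLine Ax w (k + n) := by
  obtain ⟨hc, hj⟩ := h k hk
  rcases hjk : π.just k with _ | ⟨i, j, x⟩ | i <;>
    simp only [ValidLine, hjk, hj, hc, Option.map, shiftJust] at hvl ⊢
  · exact hvl
  · obtain ⟨hi, hj, hxi, hxj, hres⟩ := hvl
    rw [(h i (by omega)).1, (h j (by omega)).1]
    exact ⟨by omega, by omega, hxi, hxj, hres⟩
  · obtain ⟨hw, hi, hsub⟩ := hvl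
    rw [(h i (by omega)).1]
    exact ⟨hw, by omega, hsub⟩

lemma EmbedsAt.isAxiomOrMerge (h : π.EmbedsAt π' n) (hv : π.Valid Ax) {k : ℕ}
    (hk : k < π.length) (hg : π.IsAxiomOrMerge k) : π'.IsAxiomOrMerge (k + n) := by
  rcases hg with hg | ⟨i, j, x, hj, l, hli, hlj⟩
  · exact .inl (by rw [(h k hk).2, hg]; rfl)
  · have hvl := hv.2 k hk
    simp only [ValidLine, hj] at hvl
    refine .inr ⟨i + n, j + n, x, by rw [(h k hk).2, hj]; rfl, l, ?_, ?_⟩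
    · rwa [(h i (by omega)).1]
    · rwa [(h j (by omega)).1]

lemma EmbedsAt.isAxiomOrMerge_of_just_eq_inl (h : π.EmbedsAt π' n) (hv : π.Valid Ax)
    (hm : π.MergeRes) {k i j : ℕ} {x : V} (hk : k < π.length)
    (hj : π'.just (k + n) = some (.inl (i, j, x))) :
    π'.IsAxiomOrMerge i ∨ π'.IsAxiomOrMerge j := by
  obtain ⟨i₀, j₀, rfl, rfl, hjk⟩ := h.just_eq_inl hk hj
  have hvl := hv.2 k hk
  simp only [ValidLine, hjk] at hvl
  exact (hm k i₀ j₀ x hjk).imp (h.isAxiomOrMerge hv (by omega)) (h.isAxiomOrMerge hv (by omega))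

variable {π₁ π₂ : Deriv V} {x : V}

def glue (π₁ π₂ : Deriv V) (x : V) : Deriv V :=
  ⟨π₁.lines ++ π₂.lines.map (fun p => (p.1, p.2.map (shiftJust π₁.length))) ++
    [(resolve π₁.lastClause π₂.lastClause x,
      some (.inl (π₁.length - 1, π₁.length + π₂.length - 1, x)))]⟩

lemma glue_length : (glue π₁ π₂ x).length = π₁.length + π₂.length + 1 := by
  simp [glue, length, add_assoc]

lemma embedsAt_glue_left : π₁.EmbedsAt (glue π₁ π₂ x) 0 := by
  rw [glue, List.append_assoc]
  exact embedsAt_append_left _ _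

lemma embedsAt_glue_right : π₂.EmbedsAt (glue π₁ π₂ x) π₁.length :=
  embedsAt_append_map _ _ _

lemma glue_line_last : (glue π₁ π₂ x).lines.getD (π₁.length + π₂.length) (∅, none) =
    (resolve π₁.lastClause π₂.lastClause x,
      some (.inl (π₁.length - 1, π₁.length + π₂.length - 1, x))) := by
  rw [glue, List.getD_append_right _ _ _ _ (by simp [length])]
  simp [length]

lemma glue_just_last : (glue π₁ π₂ x).just (π₁.length + π₂.length) =
    some (.inl (π₁.length - 1, π₁.length + π₂.length - 1, x)) := by
  rw [just, glue_line_last]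

lemma glue_lastClause :
    (glue π₁ π₂ x).lastClause = resolve π₁.lastClause π₂.lastClause x := by
  rw [lastClause, glue_length, Nat.add_sub_cancel, clause, glue_line_last]

lemma glue_clause_left_last (h₁ : 0 < π₁.length) :
    (glue π₁ π₂ x).clause (π₁.length - 1) = π₁.lastClause :=
  (embedsAt_glue_left (π₁.length - 1) (by omega)).1

lemma glue_clause_right_last (h₂ : 0 < π₂.length) :
    (glue π₁ π₂ x).clause (π₁.length + π₂.length - 1) = π₂.lastClause := by
  rw [show π₁.length + π₂.length - 1 = π₂.length - 1 + π₁.length by omega]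
  exact (embedsAt_glue_right (π₂.length - 1) (by omega)).1

lemma glue_valid (hv₁ : π₁.Valid Ax) (hv₂ : π₂.Valid Ax) (hx₁ : (x, true) ∈ π₁.lastClause)
    (hx₂ : (x, false) ∈ π₂.lastClause) : (glue π₁ π₂ x).Valid Ax := by
  refine ⟨by rw [glue_length]; omega, fun k hk => ?_⟩
  rw [glue_length] at hk
  refine Nat.cases_lt_add_add_one hk (fun k hk => embedsAt_glue_left.validLine hk (hv₁.2 k hk))
    (fun k hk => embedsAt_glue_right.validLine hk (hv₂.2 k hk)) ?_
  have h₁ := hv₁.1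
  have h₂ := hv₂.1
  simp only [ValidLine, glue_just_last]
  refine ⟨by omega, by omega, ?_, ?_, ?_⟩
  · rwa [glue_clause_left_last h₁]
  · rwa [glue_clause_right_last h₂]
  · rw [glue_clause_left_last h₁, glue_clause_right_last h₂, clause, glue_line_last]

lemma glue_isParent (hv₁ : π₁.Valid Ax) (hv₂ : π₂.Valid Ax) {a k : ℕ}
    (hp : (glue π₁ π₂ x).IsParent a k) :
    (a < k ∧ k < π₁.length ∧ π₁.IsParent a k) ∨
    (∃ a₀ k₀, a = a₀ + π₁.length ∧ k = k₀ + π₁.length ∧ a₀ < k₀ ∧ k₀ < π₂.length ∧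
      π₂.IsParent a₀ k₀) ∨
    (k = π₁.length + π₂.length ∧ (a = π₁.length - 1 ∨ a = π₁.length + π₂.length - 1)) := by
  have hk := hp.lt_length
  rw [glue_length] at hk
  revert hp
  refine Nat.cases_lt_add_add_one hk (fun k hk hp => ?_) (fun k hk hp => ?_) fun hp => ?_
  · obtain ⟨a, rfl, hp₁⟩ := embedsAt_glue_left.isParent hk hp
    exact .inl ⟨by simpa using (hp₁.lt hv₁).1, by simpa using hk, by simpa using hp₁⟩
  · obtain ⟨a, rfl, hp₂⟩ := embedsAt_glue_right.isParent hk hp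
    exact .inr (.inl ⟨a, k, rfl, rfl, (hp₂.lt hv₂).1, hk, hp₂⟩)
  · rw [IsParent, glue_just_last] at hp
    rcases hp with ⟨j, y, h | h⟩ | h <;>
      simp only [Option.some.injEq, Sum.inl.injEq, Prod.mk.injEq, reduceCtorEq] at h
    · exact .inr (.inr ⟨rfl, .inl h.1.symm⟩)
    · exact .inr (.inr ⟨rfl, .inr h.2.1.symm⟩)

lemma glue_treeLike (hv₁ : π₁.Valid Ax) (hv₂ : π₂.Valid Ax) (ht₁ : π₁.TreeLike)
    (ht₂ : π₂.TreeLike) : (glue π₁ π₂ x).TreeLike := by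
  intro a k₁ k₂ hp₁ hp₂
  have := hv₁.1
  rcases glue_isParent hv₁ hv₂ hp₁ with
    ⟨ha₁, hk₁, hq₁⟩ | ⟨a₁, k₁, rfl, rfl, ha₁, hk₁, hq₁⟩ | ⟨rfl, h₁⟩ <;>
  rcases glue_isParent hv₁ hv₂ hp₂ with
    ⟨ha₂, hk₂, hq₂⟩ | ⟨a₂, k₂, h, rfl, ha₂, hk₂, hq₂⟩ | ⟨rfl, h₂⟩
  all_goals first
    | exact ht₁ _ _ _ hq₁ hq₂
    | (obtain rfl : a₂ = a₁ := by omega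
       rw [ht₂ _ _ _ hq₁ hq₂])
    | omega

lemma glue_isAxiomOrMerge_last (h₁ : 0 < π₁.length) (h₂ : 0 < π₂.length)
    (h : ∃ l, l ∈ π₁.lastClause.erase (x, true) ∧ l ∈ π₂.lastClause.erase (x, false)) :
    (glue π₁ π₂ x).IsAxiomOrMerge (π₁.length + π₂.length) :=
  .inr ⟨_, _, x, glue_just_last, by rwa [glue_clause_left_last h₁, glue_clause_right_last h₂]⟩

lemma glue_mergeRes (hv₁ : π₁.Valid Ax) (hv₂ : π₂.Valid Ax) (hm₁ : π₁.MergeRes)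
    (hm₂ : π₂.MergeRes)
    (hg : π₁.IsAxiomOrMerge (π₁.length - 1) ∨ π₂.IsAxiomOrMerge (π₂.length - 1)) :
    (glue π₁ π₂ x).MergeRes := by
  intro k i j y hj
  have hk := lt_length_of_just_eq_some hj
  rw [glue_length] at hk
  revert hj
  refine Nat.cases_lt_add_add_one hk
    (fun k hk hj => embedsAt_glue_left.isAxiomOrMerge_of_just_eq_inl hv₁ hm₁ hk hj)
    (fun k hk hj => embedsAt_glue_right.isAxiomOrMerge_of_just_eq_inl hv₂ hm₂ hk hj)
    fun hj => ?_
  simp only [glue_just_last, Option.some.injEq, Sum.inl.injEq, Prod.mk.injEq] at hj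
  obtain ⟨rfl, rfl, -⟩ := hj
  have h₁ := hv₁.1
  have h₂ := hv₂.1
  show (glue π₁ π₂ x).IsAxiomOrMerge _ ∨ (glue π₁ π₂ x).IsAxiomOrMerge _
  refine hg.imp (fun h => embedsAt_glue_left.isAxiomOrMerge (k := _ - 1) hv₁ (by omega) h)
    fun h => ?_
  have := (embedsAt_glue_right (π₁ := π₁) (x := x)).isAxiomOrMerge hv₂ (by omega) h
  rwa [show π₂.length - 1 + π₁.length = π₁.length + π₂.length - 1 by omega] at this

end Deriv

namespace ProofTree

variable {V : Type} [DecidableEq V] {Ax : Set (Clause V)}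

open Deriv

-- `Deriv` lists the premise containing the positive pivot literal first.
def toDeriv : ProofTree V → Deriv V
  | leaf C => ⟨[(C, none)]⟩
  | node a b (x, true) => glue a.toDeriv b.toDeriv x
  | node a b (x, false) => glue b.toDeriv a.toDeriv x

lemma just_toDeriv_leaf (C : Clause V) (k : ℕ) : (leaf C).toDeriv.just k = none := by
  rcases k with _ | k <;> rfl

lemma length_toDeriv (t : ProofTree V) : t.toDeriv.length = t.size := by
  induction t with
  | leaf C => rfl
  | node a b l iha ihb =>
    obtain ⟨x, _ | _⟩ := l <;> simp only [toDeriv, glue_length, iha, ihb, size]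
    omega

lemma lastClause_toDeriv (t : ProofTree V) : t.toDeriv.lastClause = t.clause := by
  induction t with
  | leaf C => rfl
  | node a b l iha ihb =>
    obtain ⟨x, _ | _⟩ := l <;> simp only [toDeriv, glue_lastClause, iha, ihb, resolve, clause]
    · exact union_comm _ _
    · rfl

lemma length_toDeriv_pos (t : ProofTree V) : 0 < t.toDeriv.length :=
  t.length_toDeriv ▸ t.one_le_size

lemma Valid.valid_toDeriv {t : ProofTree V} (hv : t.Valid Ax) : t.toDeriv.Valid Ax := by
  induction t with
  | leaf C =>
    refine ⟨Nat.one_pos, fun k hk => ?_⟩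
    obtain rfl : k = 0 := Nat.lt_one_iff.1 hk
    rw [ValidLine, just_toDeriv_leaf]
    exact hv
  | node a b l iha ihb =>
    obtain ⟨hva, hvb, hla, hlb⟩ := hv
    obtain ⟨x, _ | _⟩ := l
    · exact glue_valid (ihb hvb) (iha hva) (b.lastClause_toDeriv ▸ hlb)
        (a.lastClause_toDeriv ▸ hla)
    · exact glue_valid (iha hva) (ihb hvb) (a.lastClause_toDeriv ▸ hla)
        (b.lastClause_toDeriv ▸ hlb)

lemma Valid.treeLike_toDeriv {t : ProofTree V} (hv : t.Valid Ax) : t.toDeriv.TreeLike := by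
  induction t with
  | leaf C =>
    rintro a k - (⟨_, _, h | h⟩ | h) <;> simp [just_toDeriv_leaf] at h
  | node a b l iha ihb =>
    obtain ⟨hva, hvb, -, -⟩ := hv
    obtain ⟨x, _ | _⟩ := l
    · exact glue_treeLike hvb.valid_toDeriv hva.valid_toDeriv (ihb hvb) (iha hva)
    · exact glue_treeLike hva.valid_toDeriv hvb.valid_toDeriv (iha hva) (ihb hvb)

lemma isAxiomOrMerge_toDeriv {t : ProofTree V} (hg : t.IsAxiomOrMerge) :
    t.toDeriv.IsAxiomOrMerge (t.toDeriv.length - 1) := by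
  cases t with
  | leaf C => exact .inl (just_toDeriv_leaf C _)
  | node a b l =>
    obtain ⟨x, _ | _⟩ := l <;> simp only [toDeriv, glue_length, Nat.add_sub_cancel]
    · obtain ⟨m, hma, hmb⟩ := hg
      exact glue_isAxiomOrMerge_last b.length_toDeriv_pos a.length_toDeriv_pos
        ⟨m, by rwa [lastClause_toDeriv], by rwa [lastClause_toDeriv]⟩
    · obtain ⟨m, hma, hmb⟩ := hg
      exact glue_isAxiomOrMerge_last a.length_toDeriv_pos b.length_toDeriv_pos
        ⟨m, by rwa [lastClause_toDeriv], by rwa [lastClause_toDeriv]⟩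

lemma Valid.mergeRes_toDeriv {t : ProofTree V} (hv : t.Valid Ax) (hm : t.MergeRes) :
    t.toDeriv.MergeRes := by
  induction t with
  | leaf C =>
    intro k i j x h
    simp [just_toDeriv_leaf] at h
  | node a b l iha ihb =>
    obtain ⟨hva, hvb, -, -⟩ := hv
    obtain ⟨hma, hmb, hg⟩ := hm
    obtain ⟨x, _ | _⟩ := l
    · exact glue_mergeRes hvb.valid_toDeriv hva.valid_toDeriv (ihb hvb hmb) (iha hva hma)
        (hg.symm.imp isAxiomOrMerge_toDeriv isAxiomOrMerge_toDeriv)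
    · exact glue_mergeRes hva.valid_toDeriv hvb.valid_toDeriv (iha hva hma) (ihb hvb hmb)
        (hg.imp isAxiomOrMerge_toDeriv isAxiomOrMerge_toDeriv)

end ProofTree

/-- a tree-like derivation of `C` of length `L` can be turned into a
tree-like merge resolution derivation of some `C' ⊆ C` of length ≤ `L`. -/
theorem stmt4 {V : Type} [DecidableEq V] (Ax : Set (Clause V)) (π : Deriv V)
    (C : Clause V) (L : ℕ) (hv : π.Valid Ax) (ht : π.TreeLike)
    (hC : π.lastClause = C) (hL : π.length = L) :
    ∃ C' ⊆ C, ∃ π' : Deriv V, π'.Valid Ax ∧ π'.TreeLike ∧ π'.MergeRes ∧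
      π'.lastClause = C' ∧ π'.length ≤ L := by
  obtain ⟨t, htv, htC, hts⟩ := Deriv.exists_proofTree hv ht (Nat.sub_one_lt_of_lt hv.1)
  obtain ⟨t', ht'v, ht'm, ht'C, ht's⟩ := htv.mergeDerivable
  refine ⟨t'.clause, ht'C.trans (htC.trans hC).subset, t'.toDeriv, ht'v.valid_toDeriv,
    ht'v.treeLike_toDeriv, ht'v.mergeRes_toDeriv ht'm, t'.lastClause_toDeriv, ?_⟩
  have := π.card_ancestors_le (π.length - 1)
  have := hv.1
  rw [t'.length_toDeriv]
  omega
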